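/- arXiv:1810.11698 — 3 statements merged into one kernel-verified Lean document; each statement's English description precedes it below -/
import Mathlib

section
/- Let p ≥ 1, let σ : Fin p → ℝ with σ j > 0 for all j, and let q > 0 satisfy Φ(q) = (1 + (1/2)^(1/p))/2, where Φ is the standard normal CDF. Let a, b, x : Fin p → ℝ with a j < x j < b j for all j, and suppose σ j * q < min (x j - a j) (b j - x j) for every j. Then the product over j of the Gaussian probabilities (gaussianReal (x j) ((σ j)^2)) (Ioo (a j) (b j)) is strictly greater than 1/2. -/
open MeasureTheory ProbabilityTheory Set ENNReal

/-!
After standardization the `j`-th factor is `γ (Ioo u w)` for the standard Gaussian `γ`, with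
`u < -q` and `q < w`. By symmetry of `γ`, `γ (Ioo u w) = Φ w + Φ (-u) - 1`, which exceeds
`2 Φ q - 1 = (1/2)^(1/p)` because `Φ` is strictly increasing; a product of `p` factors each
exceeding `(1/2)^(1/p)` exceeds `1/2`.
-/

theorem ENNReal.pow_card_lt_prod {ι : Type*} [Fintype ι] [Nonempty ι] {c : ℝ≥0∞}
    {f : ι → ℝ≥0∞} (hc : 0 < c) (hf : ∀ i, c < f i) (hf_top : ∀ i, f i ≠ ∞) :
    c ^ Fintype.card ι < ∏ i, f i := by
  lift f to ι → NNReal using hf_top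
  lift c to NNReal using (hf (Classical.arbitrary ι)).ne_top
  simp only [coe_pos, coe_lt_coe] at hc hf
  rw [← Finset.card_univ, ← Finset.prod_const, ← ofNNReal_finsetProd, ← ofNNReal_finsetProd,
    coe_lt_coe]
  exact Finset.prod_lt_prod_of_nonempty (fun i _ => hc) (fun i _ => hf i) Finset.univ_nonempty

namespace ProbabilityTheory

lemma gaussianReal_Iio_strictMono (μ : ℝ) {v : NNReal} (hv : v ≠ 0) :
    StrictMono fun t => gaussianReal μ v (Iio t) := by
  intro s t hst
  have hpos : gaussianReal μ v (Ico s t) ≠ 0 :=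
    mt (fun h => gaussianReal_absolutelyContinuous' μ hv h) (by simpa using hst)
  dsimp only
  rw [← Iio_union_Ico_eq_Iio hst.le,
    measure_union ((Iio_disjoint_Ici le_rfl).mono_right Ico_subset_Ici_self) measurableSet_Ico]
  exact ENNReal.lt_add_right (measure_ne_top _ _) hpos

lemma gaussianReal_zero_Iic_eq_Ici_neg (v : NNReal) (u : ℝ) :
    gaussianReal 0 v (Iic u) = gaussianReal 0 v (Ici (-u)) := by
  conv_lhs =>
    rw [← neg_zero, ← gaussianReal_map_neg, Measure.map_apply measurable_neg measurableSet_Iic]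
  simp

lemma gaussianReal_zero_Ioo_add_one (v : NNReal) {u w : ℝ} (huw : u < w) :
    gaussianReal 0 v (Ioo u w) + 1
      = gaussianReal 0 v (Iio w) + gaussianReal 0 v (Iio (-u)) := by
  rw [← Iic_union_Ioo_eq_Iio huw,
    measure_union ((Iic_disjoint_Ioi le_rfl).mono_right Ioo_subset_Ioi_self) measurableSet_Ioo,
    gaussianReal_zero_Iic_eq_Ici_neg, add_comm (gaussianReal 0 v (Ici (-u))), add_assoc,
    ← measure_union (Iio_disjoint_Ici le_rfl).symm measurableSet_Iio, Ici_union_Iio, measure_univ]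

lemma ofReal_lt_gaussianReal_Ioo {q r u w : ℝ} (hq : 0 ≤ q) (hr : 0 ≤ r)
    (hΦ : gaussianReal 0 1 (Iio q) = ENNReal.ofReal ((1 + r) / 2)) (hu : u < -q) (hw : q < w) :
    ENNReal.ofReal r < gaussianReal 0 1 (Ioo u w) := by
  have hmono := gaussianReal_Iio_strictMono 0 one_ne_zero
  have h2r : ENNReal.ofReal r + 1 = gaussianReal 0 1 (Iio q) + gaussianReal 0 1 (Iio q) := by
    rw [hΦ, ← ENNReal.ofReal_add (by positivity) (by positivity), ← ENNReal.ofReal_one,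
      ← ENNReal.ofReal_add hr zero_le_one]
    ring_nf
  rw [← ENNReal.add_lt_add_iff_right one_ne_top, h2r,
    gaussianReal_zero_Ioo_add_one 1 (by linarith)]
  exact ENNReal.add_lt_add (hmono hw) (hmono (by linarith))

lemma gaussianReal_map_const_mul_add_const (μ : ℝ) (v : NNReal) (c y : ℝ) :
    (gaussianReal μ v).map (fun z => c * z + y)
      = gaussianReal (c * μ + y) (.mk (c ^ 2) (sq_nonneg _) * v) := by
  rw [← gaussianReal_map_add_const, ← gaussianReal_map_const_mul,
    Measure.map_map (measurable_add_const y) (measurable_const_mul c)]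
  rfl

lemma gaussianReal_Ioo_eq_standard (m : ℝ) {s : ℝ} (hs : 0 < s) (a b : ℝ) :
    gaussianReal m (s ^ 2).toNNReal (Ioo a b)
      = gaussianReal 0 1 (Ioo ((a - m) / s) ((b - m) / s)) := by
  have hvar : (s ^ 2).toNNReal = .mk (s ^ 2) (sq_nonneg _) * 1 := by ext; simp [sq_nonneg]
  have hmap := gaussianReal_map_const_mul_add_const 0 1 s m
  rw [mul_zero, zero_add, ← hvar] at hmap
  rw [← hmap, Measure.map_apply (by fun_prop) measurableSet_Ioo]
  congr 1
  ext z
  simp only [mem_preimage, mem_Ioo, div_lt_iff₀ hs, lt_div_iff₀ hs]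
  constructor <;> rintro ⟨h1, h2⟩ <;> constructor <;> linarith

end ProbabilityTheory

theorem stmt0_general (p : ℕ) (hp : 1 ≤ p) (σ : Fin p → ℝ) (hσ : ∀ j, 0 < σ j)
    (q : ℝ) (hq : 0 < q)
    (hΦ : (gaussianReal 0 1) (Iio q)
        = ENNReal.ofReal ((1 + ((1:ℝ)/2) ^ ((1:ℝ)/p)) / 2))
    (a b x : Fin p → ℝ)
    (hσq : ∀ j, σ j * q < min (x j - a j) (b j - x j)) :
    (1:ℝ≥0∞)/2 < ∏ j, (gaussianReal (x j) (((σ j)^2).toNNReal)) (Ioo (a j) (b j)) := by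
  set r : ℝ := ((1:ℝ)/2) ^ ((1:ℝ)/p)
  have hr : 0 < r := by positivity
  have hrp : ENNReal.ofReal r ^ Fintype.card (Fin p) = 1 / 2 := by
    rw [Fintype.card_fin, ← ENNReal.ofReal_pow hr.le, ← Real.rpow_natCast,
      ← Real.rpow_mul (by norm_num), one_div_mul_cancel (by positivity), Real.rpow_one,
      ENNReal.ofReal_div_of_pos two_pos, ENNReal.ofReal_one, ENNReal.ofReal_ofNat]
  have : Nonempty (Fin p) := ⟨⟨0, hp⟩⟩
  rw [← hrp]
  refine ENNReal.pow_card_lt_prod (ENNReal.ofReal_pos.mpr hr) (fun j => ?_)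
    (fun j => measure_ne_top _ _)
  have hleft := (hσq j).trans_le (min_le_left _ _)
  have hright := (hσq j).trans_le (min_le_right _ _)
  rw [gaussianReal_Ioo_eq_standard (x j) (hσ j)]
  refine ofReal_lt_gaussianReal_Ioo hq.le hr.le hΦ ?_ ?_
  · rw [div_lt_iff₀ (hσ j)]
    linarith
  · rw [lt_div_iff₀ (hσ j)]
    linarith

/-- Multidimensional leaf-membership bound: if `x` lies in the interior of the
hyper-rectangle `∏ j, [a j, b j]` and each `σ j * q` is smaller than the distance from
`x j` to both endpoints, where `q` is the `(1 + 0.5^(1/p))/2` quantile of the standard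
Gaussian, then the product of the per-coordinate Gaussian probabilities of the open
intervals exceeds `1/2`. -/
theorem stmt0 (p : ℕ) (hp : 1 ≤ p) (σ : Fin p → ℝ) (hσ : ∀ j, 0 < σ j)
    (q : ℝ) (hq : 0 < q)
    (hΦ : (gaussianReal 0 1) (Iio q)
        = ENNReal.ofReal ((1 + ((1:ℝ)/2) ^ ((1:ℝ)/p)) / 2))
    (a b x : Fin p → ℝ) (hax : ∀ j, a j < x j) (hxb : ∀ j, x j < b j)
    (hσq : ∀ j, σ j * q < min (x j - a j) (b j - x j)) :
    (1:ℝ≥0∞)/2 < ∏ j, (gaussianReal (x j) (((σ j)^2).toNNReal)) (Ioo (a j) (b j)) :=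
  stmt0_general p hp σ hσ q hq hΦ a b x hσq
end

section
/- Let n, K ≥ 1 and let P be an n × K real matrix with nonnegative entries whose rows each sum to 1. Suppose that for every column k there exists a row i with P i k > 1/2. Then the K × K matrix Pᵀ * P is invertible. -/
/-!
A vector `v` in the kernel of `P` vanishes: at a coordinate `k` where `|v k|` is maximal, pick a
row `p` of `P` with `p k > 1/2`. Averaging the nonnegative quantities `|v k| ± v j` against the
probability vector `p` gives `p k * 2|v k| ≤ |v k|`, forcing `v = 0`. Over an ordered field
`Pᵀ * P` has the same kernel as `P`, so it is invertible.
-/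

open Matrix

variable {ι κ R : Type*} [Fintype κ] [Field R] [LinearOrder R] [IsStrictOrderedRing R]

theorem Matrix.isUnit_transpose_mul_self_of_mulVec_eq_zero [Fintype ι] [DecidableEq κ]
    {A : Matrix ι κ R} (hA : ∀ v, A *ᵥ v = 0 → v = 0) : IsUnit (Aᵀ * A) := by
  have hker : LinearMap.ker (Aᵀ * A).mulVecLin = ⊥ := by
    rwa [ker_mulVecLin_transpose_mul_self, ker_mulVecLin_eq_bot_iff]
  exact mulVec_injective_iff_isUnit.mp (LinearMap.ker_eq_bot.mp hker)

theorem mul_add_le_of_dotProduct_eq_zero {p v : κ → R} {M : R} (hp : ∀ j, 0 ≤ p j)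
    (hp_sum : ∑ j, p j = 1) (hM : ∀ j, -M ≤ v j) (hpv : p ⬝ᵥ v = 0) (k : κ) :
    p k * (M + v k) ≤ M :=
  calc p k * (M + v k)
      ≤ ∑ j, p j * (M + v j) :=
        Finset.single_le_sum (f := fun j ↦ p j * (M + v j))
          (fun j _ ↦ mul_nonneg (hp j) (by linarith [hM j])) (Finset.mem_univ k)
    _ = M := by
        simp only [mul_add, Finset.sum_add_distrib, ← Finset.sum_mul, hp_sum, one_mul]
        exact add_eq_left.mpr hpv

theorem mul_add_abs_le_of_dotProduct_eq_zero {p v : κ → R} {M : R} (hp : ∀ j, 0 ≤ p j)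
    (hp_sum : ∑ j, p j = 1) (hM : ∀ j, |v j| ≤ M) (hpv : p ⬝ᵥ v = 0) (k : κ) :
    p k * (M + |v k|) ≤ M := by
  have hplus := mul_add_le_of_dotProduct_eq_zero hp hp_sum
    (fun j ↦ neg_le_of_abs_le (hM j)) hpv k
  have hminus := mul_add_le_of_dotProduct_eq_zero (v := -v) hp hp_sum
    (fun j ↦ neg_le_neg (le_of_abs_le (hM j))) (by rw [dotProduct_neg, hpv, neg_zero]) k
  rcases abs_cases (v k) with ⟨h, -⟩ | ⟨h, -⟩ <;> rw [h]
  · exact hplus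
  · simpa only [Pi.neg_apply] using hminus

theorem Matrix.eq_zero_of_mulVec_eq_zero_of_exists_gt_half {P : Matrix ι κ R}
    (hP : ∀ i k, 0 ≤ P i k) (hrow : ∀ i, ∑ k, P i k = 1) (hcol : ∀ k, ∃ i, 1 / 2 < P i k)
    {v : κ → R} (hv : P *ᵥ v = 0) : v = 0 := by
  cases isEmpty_or_nonempty κ
  · exact Subsingleton.elim _ _
  obtain ⟨k₀, hk₀⟩ := Finite.exists_max fun k ↦ |v k|
  obtain ⟨i, hi⟩ := hcol k₀
  have hbound : P i k₀ * (|v k₀| + |v k₀|) ≤ |v k₀| :=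
    mul_add_abs_le_of_dotProduct_eq_zero (hP i) (hrow i) hk₀ (congrFun hv i) k₀
  have hmax : |v k₀| ≤ 0 := by nlinarith [abs_nonneg (v k₀)]
  funext k
  exact abs_nonpos_iff.mp ((hk₀ k).trans hmax)

theorem stmt6_general (n K : ℕ)
    (P : Matrix (Fin n) (Fin K) ℝ)
    (hnonneg : ∀ i k, 0 ≤ P i k)
    (hrow : ∀ i, ∑ k, P i k = 1)
    (hcol : ∀ k, ∃ i, (1:ℝ)/2 < P i k) :
    IsUnit (Pᵀ * P) :=
  isUnit_transpose_mul_self_of_mulVec_eq_zero fun _ ↦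
    eq_zero_of_mulVec_eq_zero_of_exists_gt_half hnonneg hrow hcol

/-- If `P` is a nonnegative row-stochastic matrix and each column has some row entry
exceeding `1/2`, then the Gram matrix `Pᵀ * P` is invertible. -/
theorem stmt6 (n K : ℕ) (hn : 1 ≤ n) (hK : 1 ≤ K)
    (P : Matrix (Fin n) (Fin K) ℝ)
    (hnonneg : ∀ i k, 0 ≤ P i k)
    (hrow : ∀ i, ∑ k, P i k = 1)
    (hcol : ∀ k, ∃ i, (1:ℝ)/2 < P i k) :
    IsUnit (Pᵀ * P) :=
  stmt6_general n K P hnonneg hrow hcol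
end

section
/- Let n, K, p ≥ 1. Let x : Fin n → Fin p → ℝ be n observations, σ : Fin p → ℝ with σ j > 0, and let q > 0 satisfy Φ(q) = (1 + (1/2)^(1/p))/2 where Φ is the standard normal CDF. Let a, b : Fin K → Fin p → ℝ define K hyper-rectangular regions, and define the n × K matrix P by P i k = ∏_{j} (gaussianReal (x i j) ((σ j)^2)) (Ioo (a k j) (b k j)). Assume (i) for every i, ∑_{k} P i k = 1, and (ii) for every region k there exists an observation i with a k j < x i j < b k j and σ j * q < min (x i j - a k j) (b k j - x i j) for all j. Then the K × K matrix Pᵀ * P is invertible. -/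
open MeasureTheory ProbabilityTheory Set Matrix
open scoped NNReal ENNReal

/-!
Each region `k` has an observation `i` lying more than `σ j * q` inside every face, so each
Gaussian factor of `P i k` exceeds the mass `(1/2)^(1/p)` that `N(0,1)` gives to `[-q, q]`, and
`P i k > 1/2`. As the row of `P` is a probability vector, its entry in column `k` then strictly
dominates the rest of the row. A vector `v` with `P v = 0` is therefore zero: in the row dominated
by a column where `|v|` is maximal, that column's term cannot be cancelled by the others. Hence
`P` is injective, and so is `Pᵀ P`, since `vᵀ Pᵀ P v = ‖P v‖²`.
-/

namespace Matrix

variable {R : Type*} [Field R] [LinearOrder R] [IsStrictOrderedRing R]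
  {m n : Type*} [Fintype n] [DecidableEq n]

theorem eq_zero_of_mulVec_eq_zero_of_forall_exists_dominant (A : Matrix m n R)
    (hA : ∀ k, ∃ i, ∑ l ∈ Finset.univ.erase k, |A i l| < |A i k|) {v : n → R}
    (hv : A *ᵥ v = 0) : v = 0 := by
  by_contra hv0
  obtain ⟨k, -, hk⟩ := Finset.exists_max_image Finset.univ (fun l => |v l|)
    (Finset.univ_nonempty_iff.mpr (Function.ne_iff.mp hv0).nonempty)
  have hvk : 0 < |v k| := by
    obtain ⟨l, hl⟩ := Function.ne_iff.mp hv0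
    exact (abs_pos.mpr hl).trans_le (hk l (Finset.mem_univ l))
  obtain ⟨i, hi⟩ := hA k
  have hrow : A i k * v k = -∑ l ∈ Finset.univ.erase k, A i l * v l := by
    have h := Finset.add_sum_erase Finset.univ (fun l => A i l * v l) (Finset.mem_univ k)
    have hzero : ∑ l, A i l * v l = 0 := congrFun hv i
    linarith
  have : |A i k| * |v k| < |A i k| * |v k| :=
    calc |A i k| * |v k| = |∑ l ∈ Finset.univ.erase k, A i l * v l| := by
          rw [← abs_mul, hrow, abs_neg]
      _ ≤ ∑ l ∈ Finset.univ.erase k, |A i l| * |v l| := by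
          simpa only [abs_mul] using Finset.abs_sum_le_sum_abs (fun l => A i l * v l) _
      _ ≤ ∑ l ∈ Finset.univ.erase k, |A i l| * |v k| :=
          Finset.sum_le_sum fun l _ => mul_le_mul_of_nonneg_left (hk l (Finset.mem_univ l))
            (abs_nonneg _)
      _ < |A i k| * |v k| := by
          rw [← Finset.sum_mul]
          exact mul_lt_mul_of_pos_right hi hvk
  exact this.false

theorem isUnit_transpose_mul_self_of_mulVec_eq_zero_s7 {A : Matrix m n R} [Fintype m]
    (hA : ∀ v, A *ᵥ v = 0 → v = 0) : IsUnit (Aᵀ * A) := by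
  rw [← mulVec_injective_iff_isUnit]
  exact LinearMap.ker_eq_bot.mp <|
    (ker_mulVecLin_transpose_mul_self A).trans (ker_mulVecLin_eq_bot_iff.mpr hA)

end Matrix

theorem sum_erase_abs_lt_abs_of_sum_eq_one {R ι : Type*} [Field R] [LinearOrder R]
    [IsStrictOrderedRing R] [Fintype ι] [DecidableEq ι] {w : ι → R} (hw0 : ∀ l, 0 ≤ w l)
    (hw1 : ∑ l, w l = 1) {k : ι} (hk : 1 / 2 < w k) :
    ∑ l ∈ Finset.univ.erase k, |w l| < |w k| := by
  have h := Finset.add_sum_erase Finset.univ w (Finset.mem_univ k)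
  simp only [abs_of_nonneg (hw0 _)]
  linarith

theorem measureReal_Icc_lt_measureReal_Ioo {ν : Measure ℝ} [IsFiniteMeasure ν]
    (hν : volume ≪ ν) {a b c d : ℝ} (hac : a < c) (hcd : c ≤ d) (hdb : d < b) :
    ν.real (Icc c d) < ν.real (Ioo a b) := by
  have hpos : 0 < ν.real (Ioo a c) := by
    refine ENNReal.toReal_pos (fun h => ?_) (measure_ne_top _ _)
    have := hν h
    rw [Real.volume_Ioo, ENNReal.ofReal_eq_zero] at this
    linarith
  have hdisj : Disjoint (Ioo a c) (Icc c d) :=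
    Set.disjoint_left.mpr fun z hz hz' => hz.2.not_ge hz'.1
  have hsub : Ioo a c ∪ Icc c d ⊆ Ioo a b := by
    rintro z (⟨h1, h2⟩ | ⟨h1, h2⟩)
    · exact ⟨h1, by linarith⟩
    · exact ⟨by linarith, by linarith⟩
  calc ν.real (Icc c d) < ν.real (Ioo a c) + ν.real (Icc c d) := by linarith
    _ = ν.real (Ioo a c ∪ Icc c d) := (measureReal_union hdisj measurableSet_Icc).symm
    _ ≤ ν.real (Ioo a b) := measureReal_mono hsub

theorem gaussianReal_sq_toNNReal_eq_map (m s : ℝ) :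
    gaussianReal m (s ^ 2).toNNReal = (gaussianReal 0 1).map (fun z => s * z + m) := by
  have hscale : (gaussianReal 0 1).map (s * ·) = gaussianReal 0 (s ^ 2).toNNReal := by
    rw [gaussianReal_map_const_mul, mul_zero, mul_one]
    congr
    simp [sq_nonneg s]
  have hcomp : (fun z => s * z + m) = (· + m) ∘ (s * ·) := rfl
  rw [hcomp, ← Measure.map_map (by fun_prop) (by fun_prop), hscale, gaussianReal_map_add_const,
    zero_add]

theorem gaussianReal_real_Icc_eq (m : ℝ) {s : ℝ} (hs : 0 < s) (q : ℝ) :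
    (gaussianReal m (s ^ 2).toNNReal).real (Icc (m - s * q) (m + s * q))
      = (gaussianReal 0 1).real (Icc (-q) q) := by
  rw [gaussianReal_sq_toNNReal_eq_map, map_measureReal_apply (by fun_prop) measurableSet_Icc]
  congr 1
  ext z
  simp only [mem_preimage, mem_Icc]
  constructor <;> rintro ⟨h1, h2⟩ <;> constructor <;> nlinarith

theorem gaussianReal_real_Icc_neg (q : ℝ) (hq : 0 ≤ q) :
    (gaussianReal 0 1).real (Icc (-q) q) = 2 * (gaussianReal 0 1).real (Iio q) - 1 := by
  set μ := gaussianReal 0 1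
  have := nullSingletonClass_gaussianReal (μ := 0) one_ne_zero
  have hsymm : μ.real (Iio (-q)) = μ.real (Ioi q) := by
    have hneg : μ.map (fun z => -z) = μ := by rw [gaussianReal_map_neg, neg_zero]
    conv_lhs => rw [← hneg]
    rw [map_measureReal_apply (by fun_prop) measurableSet_Iio]
    congr 1
    ext z
    simp
  have hIoi : μ.real (Ioi q) = 1 - μ.real (Iio q) := by
    rw [← compl_Iic, measureReal_compl measurableSet_Iic, probReal_univ,
      measureReal_congr Iio_ae_eq_Iic]
  have hsplit : μ.real (Iio (-q)) + μ.real (Icc (-q) q) = μ.real (Iic q) := by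
    rw [← measureReal_union (Set.disjoint_left.mpr fun z hz hz' => hz.not_ge hz'.1)
      measurableSet_Icc, Iio_union_Icc_eq_Iic (by linarith)]
  rw [← measureReal_congr Iio_ae_eq_Iic] at hsplit
  linarith

theorem stmt7_general (n K p : ℕ) (hp : 1 ≤ p)
    (x : Fin n → Fin p → ℝ) (σ : Fin p → ℝ) (hσ : ∀ j, 0 < σ j)
    (q : ℝ) (hq : 0 < q)
    (hΦ : (gaussianReal 0 1) (Iio q)
        = ENNReal.ofReal ((1 + ((1:ℝ)/2) ^ ((1:ℝ)/p)) / 2))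
    (a b : Fin K → Fin p → ℝ)
    (P : Matrix (Fin n) (Fin K) ℝ)
    (hP : ∀ i k, P i k
        = ∏ j, ((gaussianReal (x i j) (((σ j)^2).toNNReal))
            (Ioo (a k j) (b k j))).toReal)
    (hrow : ∀ i, ∑ k, P i k = 1)
    (hrep : ∀ k, ∃ i, ∀ j, a k j < x i j ∧ x i j < b k j ∧
        σ j * q < min (x i j - a k j) (b k j - x i j)) :
    IsUnit (Pᵀ * P) := by
  set c : ℝ := (1 / 2) ^ ((1 : ℝ) / p)
  have hc_pos : 0 < c := by positivity
  have hcp : c ^ p = 1 / 2 := by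
    rw [← Real.rpow_natCast, ← Real.rpow_mul (by norm_num),
      one_div_mul_cancel (by positivity), Real.rpow_one]
  have hmass : (gaussianReal 0 1).real (Icc (-q) q) = c := by
    rw [gaussianReal_real_Icc_neg q hq.le, measureReal_def, hΦ,
      ENNReal.toReal_ofReal (by positivity)]
    ring
  have hdom : ∀ k, ∃ i, 1 / 2 < P i k := by
    intro k
    obtain ⟨i, hi⟩ := hrep k
    refine ⟨i, ?_⟩
    rw [← hcp, ← Fin.prod_const, hP]
    refine Finset.prod_lt_prod_of_nonempty (fun _ _ => hc_pos) (fun j _ => ?_)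
      (Finset.univ_nonempty_iff.mpr ⟨⟨0, hp⟩⟩)
    obtain ⟨-, -, hmin⟩ := hi j
    rw [← hmass, ← gaussianReal_real_Icc_eq (x i j) (hσ j) q]
    exact measureReal_Icc_lt_measureReal_Ioo
      (gaussianReal_absolutelyContinuous' _ (by simpa using (hσ j).ne'))
      (by linarith [min_le_left (x i j - a k j) (b k j - x i j)])
      (by nlinarith [hσ j])
      (by linarith [min_le_right (x i j - a k j) (b k j - x i j)])
  have hPnn : ∀ i k, 0 ≤ P i k := fun i k =>
    hP i k ▸ Finset.prod_nonneg fun _ _ => ENNReal.toReal_nonneg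
  refine isUnit_transpose_mul_self_of_mulVec_eq_zero_s7 fun v => ?_
  refine P.eq_zero_of_mulVec_eq_zero_of_forall_exists_dominant fun k => ?_
  obtain ⟨i, hi⟩ := hdom k
  exact ⟨i, sum_erase_abs_lt_abs_of_sum_eq_one (hPnn i) (hrow i) hi⟩

/-- Theorem 1 of the paper: with `P i k` the probability that the Gaussian-perturbed
latent point `U_i ~ ⊗_j N(x i j, (σ j)²)` lies in the region `∏_j (a k j, b k j)`,
if the rows of `P` sum to 1 and every region contains an observation whose distance to
all faces exceeds `σ j * q` (with `q` the `(1 + 0.5^(1/p))/2` standard normal quantile),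
then `Pᵀ * P` is invertible. -/
theorem stmt7 (n K p : ℕ) (hn : 1 ≤ n) (hK : 1 ≤ K) (hp : 1 ≤ p)
    (x : Fin n → Fin p → ℝ) (σ : Fin p → ℝ) (hσ : ∀ j, 0 < σ j)
    (q : ℝ) (hq : 0 < q)
    (hΦ : (gaussianReal 0 1) (Iio q)
        = ENNReal.ofReal ((1 + ((1:ℝ)/2) ^ ((1:ℝ)/p)) / 2))
    (a b : Fin K → Fin p → ℝ)
    (P : Matrix (Fin n) (Fin K) ℝ)
    (hP : ∀ i k, P i k
        = ∏ j, ((gaussianReal (x i j) (((σ j)^2).toNNReal))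
            (Ioo (a k j) (b k j))).toReal)
    (hrow : ∀ i, ∑ k, P i k = 1)
    (hrep : ∀ k, ∃ i, ∀ j, a k j < x i j ∧ x i j < b k j ∧
        σ j * q < min (x i j - a k j) (b k j - x i j)) :
    IsUnit (Pᵀ * P) :=
  stmt7_general n K p hp x σ hσ q hq hΦ a b P hP hrow hrep
end
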